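/- arXiv:0802.1025 — 2 statements merged into one kernel-verified Lean document; each statement's English description precedes it below -/
import Mathlib

section
/- Suppose the distribution function F has a density f and quantile function Q with f(Q(y)) ∼ y^{γ₁} L₁(1/y) as y ↓ 0, where 0 < γ₁ < 1 and L₁ is slowly varying at infinity. Then F has bounded support from the left, i.e., a = sup{x : F(x) = 0} > −∞. -/
open Set Filter Topology

/-!
Write `h y = f (Q y)`, so that `Q' = 1 / h`. Slow variation of `L₁` gives `h (2y) / h y → 2 ^ γ₁`,
and `2 ^ γ₁ < 2`, so `h (2y) ≤ κ h y` near `0` for some `κ < 2`. Then `y ↦ (κ / 2) Q (2y) - Q y` is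
nondecreasing near `0`, so along `yₙ = b / 2ⁿ` the quantiles obey the contracting affine
recursion `Q yₙ₊₁ ≥ (κ / 2) Q yₙ - C` and stay bounded below, by `m` say. Then `F` vanishes to the
left of `m`.
-/

lemma exists_forall_le_of_le_mul_sub {a : ℕ → ℝ} {ρ C : ℝ} (hρ0 : 0 ≤ ρ) (hρ1 : ρ < 1)
    (h : ∀ n, ρ * a n - C ≤ a (n + 1)) : ∃ m, ∀ n, m ≤ a n := by
  refine ⟨min (a 0) (-C / (1 - ρ)), fun n => ?_⟩
  induction n with
  | zero => exact min_le_left _ _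
  | succ n ih =>
    have hfix : (1 - ρ) * min (a 0) (-C / (1 - ρ)) ≤ -C :=
      (le_div_iff₀' (sub_pos.2 hρ1)).1 (min_le_right _ _)
    nlinarith [h n, mul_le_mul_of_nonneg_left ih hρ0]

lemma monotoneOn_Ioo_of_hasDerivAt_nonneg {f f' : ℝ → ℝ} {a b : ℝ}
    (hf : ∀ x ∈ Ioo a b, HasDerivAt f (f' x) x) (hf' : ∀ x ∈ Ioo a b, 0 ≤ f' x) :
    MonotoneOn f (Ioo a b) :=
  monotoneOn_of_hasDerivWithinAt_nonneg (convex_Ioo a b)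
    (fun x hx => (hf x hx).continuousAt.continuousWithinAt)
    (fun x hx => (hf x (interior_Ioo (a := a) (b := b) ▸ hx)).hasDerivWithinAt)
    (fun x hx => hf' x (interior_Ioo (a := a) (b := b) ▸ hx))

section Doubling

variable {Q h : ℝ → ℝ} {κ y₀ : ℝ}

lemma monotoneOn_const_mul_comp_two_mul_sub (hQ : ∀ σ ∈ Ioo 0 y₀, HasDerivAt Q (h σ)⁻¹ σ)
    (hpos : ∀ σ ∈ Ioo 0 y₀, 0 < h σ) (hdouble : ∀ σ ∈ Ioo 0 (y₀ / 2), h (2 * σ) ≤ κ * h σ) :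
    MonotoneOn (fun σ => κ / 2 * Q (2 * σ) - Q σ) (Ioo 0 (y₀ / 2)) := by
  have hmem₁ : ∀ σ ∈ Ioo 0 (y₀ / 2), σ ∈ Ioo 0 y₀ := fun σ hσ =>
    ⟨hσ.1, by linarith [hσ.1, hσ.2]⟩
  have hmem₂ : ∀ σ ∈ Ioo 0 (y₀ / 2), 2 * σ ∈ Ioo 0 y₀ := fun σ hσ =>
    ⟨by linarith [hσ.1], by linarith [hσ.2]⟩
  refine monotoneOn_Ioo_of_hasDerivAt_nonneg
    (fun σ hσ => (((hQ _ (hmem₂ σ hσ)).scomp σ ((hasDerivAt_id σ).const_mul 2)).const_mul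
      (κ / 2)).sub (hQ σ (hmem₁ σ hσ))) fun σ hσ => ?_
  simp only [smul_eq_mul, mul_one, sub_nonneg]
  rw [← mul_assoc, div_mul_cancel₀ κ two_ne_zero, ← div_eq_mul_inv,
    inv_le_iff_one_le_mul₀ (hpos _ (hmem₁ σ hσ)), div_mul_eq_mul_div,
    one_le_div (hpos _ (hmem₂ σ hσ))]
  exact hdouble σ hσ

lemma exists_forall_le_of_hasDerivAt_inv_of_doubling (hy₀ : 0 < y₀) (hκ0 : 0 ≤ κ) (hκ : κ < 2)
    (hQ : ∀ σ ∈ Ioo 0 y₀, HasDerivAt Q (h σ)⁻¹ σ) (hpos : ∀ σ ∈ Ioo 0 y₀, 0 < h σ)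
    (hdouble : ∀ σ ∈ Ioo 0 (y₀ / 2), h (2 * σ) ≤ κ * h σ) :
    ∃ m, ∀ σ ∈ Ioo 0 y₀, m ≤ Q σ := by
  have hQmono : MonotoneOn Q (Ioo 0 y₀) :=
    monotoneOn_Ioo_of_hasDerivAt_nonneg hQ fun σ hσ => inv_nonneg.2 (hpos σ hσ).le
  have hg := monotoneOn_const_mul_comp_two_mul_sub hQ hpos hdouble
  obtain ⟨b, hb⟩ : ∃ b, b ∈ Ioo 0 (y₀ / 2) := ⟨y₀ / 4, by positivity, by linarith⟩
  have hdyadic_le : ∀ n : ℕ, b / 2 ^ n ≤ b := fun n => div_le_self hb.1.le (one_le_pow₀ one_le_two)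
  have hdyadic : ∀ n : ℕ, b / 2 ^ n ∈ Ioo 0 (y₀ / 2) := fun n =>
    ⟨div_pos hb.1 (by positivity), (hdyadic_le n).trans_lt hb.2⟩
  obtain ⟨m, hm⟩ := exists_forall_le_of_le_mul_sub (a := fun n => Q (b / 2 ^ n)) (ρ := κ / 2)
    (C := κ / 2 * Q (2 * b) - Q b) (by positivity) (by linarith) fun n => by
      have := hg (hdyadic (n + 1)) hb (hdyadic_le (n + 1))
      simp only [show 2 * (b / 2 ^ (n + 1)) = b / 2 ^ n by ring] at this
      linarith
  refine ⟨m, fun σ hσ => ?_⟩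
  obtain ⟨n, hn⟩ := exists_pow_lt_of_lt_one (div_pos hσ.1 hb.1) one_half_lt_one
  refine (hm n).trans (hQmono ⟨(hdyadic n).1, (hdyadic n).2.trans (half_lt_self hy₀)⟩ hσ ?_)
  calc b / 2 ^ n = (1 / 2) ^ n * b := by rw [one_div_pow]; ring
    _ ≤ σ := ((lt_div_iff₀ hb.1).1 hn).le

end Doubling

def SlowlyVarying (L : ℝ → ℝ) : Prop :=
  ∀ t > (0 : ℝ), Tendsto (fun x => L (t * x) / L x) atTop (𝓝 1)

lemma tendsto_const_mul_nhdsGT_zero {t : ℝ} (ht : 0 < t) :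
    Tendsto (t * ·) (𝓝[>] 0) (𝓝[>] 0) := by
  refine tendsto_nhdsWithin_of_tendsto_nhds_of_eventually_within _ ?_ ?_
  · simpa using ((continuous_const_mul t).tendsto 0).mono_left nhdsWithin_le_nhds
  · filter_upwards [self_mem_nhdsWithin] with y hy using mul_pos ht hy

lemma SlowlyVarying.tendsto_comp_mul_div_self {L h : ℝ → ℝ} {γ t : ℝ} (hL : SlowlyVarying L)
    (ht : 0 < t) (hh : Tendsto (fun y => h y / (y ^ γ * L (1 / y))) (𝓝[>] 0) (𝓝 1)) :
    Tendsto (fun y => h (t * y) / h y) (𝓝[>] 0) (𝓝 (t ^ γ)) := by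
  set A := fun y => h y / (y ^ γ * L (1 / y))
  have hAt : Tendsto (fun y => A (t * y)) (𝓝[>] 0) (𝓝 1) :=
    hh.comp (tendsto_const_mul_nhdsGT_zero ht)
  have hLt : Tendsto (fun y : ℝ => L (t⁻¹ * (1 / y)) / L (1 / y)) (𝓝[>] 0) (𝓝 1) :=
    (hL t⁻¹ (inv_pos.2 ht)).comp (tendsto_inv_nhdsGT_zero.congr fun x => (one_div x).symm)
  have hlim := ((hAt.const_mul (t ^ γ)).mul hLt).div hh one_ne_zero
  rw [mul_one, mul_one, div_one] at hlim
  refine hlim.congr' ?_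
  filter_upwards [self_mem_nhdsWithin, hh.eventually_ne one_ne_zero,
    hAt.eventually_ne one_ne_zero] with y (hy : 0 < y) hAy hAty
  obtain ⟨hhy, hdy⟩ := div_ne_zero_iff.1 hAy
  obtain ⟨-, hdty⟩ := div_ne_zero_iff.1 hAty
  have hinv : t⁻¹ * (1 / y) = 1 / (t * y) := by field_simp
  simp only [A, Pi.div_apply, hinv, Real.mul_rpow ht.le hy.le] at hdty ⊢
  have := right_ne_zero_of_mul hdy
  have := right_ne_zero_of_mul hdty
  field_simp

noncomputable def quantile (F : ℝ → ℝ) (y : ℝ) : ℝ := sInf {x | y ≤ F x}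

section Quantile

variable {F : ℝ → ℝ} {x y : ℝ}

lemma bddBelow_setOf_le_of_tendsto_atBot (hF0 : Tendsto F atBot (𝓝 0)) (hy : 0 < y) :
    BddBelow {x | y ≤ F x} := by
  obtain ⟨x₀, hx₀⟩ := eventually_atBot.1 (hF0.eventually (eventually_lt_nhds hy))
  exact ⟨x₀, fun z hz => not_lt.1 fun hzx => (hx₀ z hzx.le).not_ge hz⟩

lemma quantile_le (hF0 : Tendsto F atBot (𝓝 0)) (hy : 0 < y) (hx : y ≤ F x) :
    quantile F y ≤ x :=
  csInf_le (bddBelow_setOf_le_of_tendsto_atBot hF0 hy) hx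

lemma lt_of_lt_quantile (hF0 : Tendsto F atBot (𝓝 0)) (hy : 0 < y) (hx : x < quantile F y) :
    F x < y :=
  not_le.1 fun h => (quantile_le hF0 hy h).not_gt hx

lemma le_map_quantile (hF : Continuous F) (hF0 : Tendsto F atBot (𝓝 0))
    (hF1 : Tendsto F atTop (𝓝 1)) (hy : y ∈ Ioo 0 1) : y ≤ F (quantile F y) := by
  obtain ⟨x₁, hx₁⟩ := (hF1.eventually (eventually_gt_nhds hy.2)).exists
  exact (isClosed_le continuous_const hF).csInf_mem ⟨x₁, hx₁.le⟩
    (bddBelow_setOf_le_of_tendsto_atBot hF0 hy.1)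

lemma map_quantile (hF : Continuous F) (hF0 : Tendsto F atBot (𝓝 0))
    (hF1 : Tendsto F atTop (𝓝 1)) (hy : y ∈ Ioo 0 1) : F (quantile F y) = y := by
  refine le_antisymm ?_ (le_map_quantile hF hF0 hF1 hy)
  refine le_of_tendsto (hF.continuousWithinAt (s := Iio (quantile F y))) ?_
  filter_upwards [self_mem_nhdsWithin] with x hx using (lt_of_lt_quantile hF0 hy.1 hx).le

lemma continuousAt_quantile (hF : Continuous F) (hFm : Monotone F) (hF0 : Tendsto F atBot (𝓝 0))
    (hF1 : Tendsto F atTop (𝓝 1)) (hy : y ∈ Ioo 0 1)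
    (hright : ∀ b > quantile F y, y < F b) : ContinuousAt (quantile F) y := by
  refine tendsto_order.2 ⟨fun a ha => ?_, fun b hb => ?_⟩
  · have hFa : F a < y := lt_of_lt_quantile hF0 hy.1 ha
    filter_upwards [Ioo_mem_nhds hFa hy.2, Ioi_mem_nhds hy.1] with y' hy' hy'0
    by_contra! h
    exact (le_map_quantile hF hF0 hF1 ⟨hy'0, hy'.2⟩).trans (hFm h) |>.not_gt hy'.1
  · obtain ⟨b', hb', hb'b⟩ := exists_between hb
    filter_upwards [Ioo_mem_nhds hy.1 (hright b' hb')] with y' hy'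
    exact (quantile_le hF0 hy'.1 hy'.2.le).trans_lt hb'b

lemma Monotone.lt_of_hasDerivAt_of_pos {f' b : ℝ} (hF : Monotone F)
    (hd : HasDerivAt F f' x) (hf' : 0 < f') (hb : x < b) : F x < F b := by
  have hslope : ∀ᶠ z in 𝓝[>] x, 0 < slope F x z :=
    ((hasDerivAt_iff_tendsto_slope.1 hd).mono_left (nhdsGT_le_nhdsNE x)).eventually
      (eventually_gt_nhds hf')
  obtain ⟨z, hz, hzb⟩ := (hslope.and (Ioo_mem_nhdsGT hb)).exists
  rw [slope_def_field, div_pos_iff_of_pos_right (sub_pos.2 hzb.1), sub_pos] at hz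
  exact hz.trans_le (hF hzb.2.le)

lemma hasDerivAt_quantile {f' : ℝ} (hF : Continuous F) (hFm : Monotone F)
    (hF0 : Tendsto F atBot (𝓝 0)) (hF1 : Tendsto F atTop (𝓝 1)) (hy : y ∈ Ioo 0 1)
    (hd : HasDerivAt F f' (quantile F y)) (hf' : 0 < f') :
    HasDerivAt (quantile F) f'⁻¹ y := by
  have hright : ∀ b > quantile F y, y < F b := fun b hb =>
    map_quantile hF hF0 hF1 hy ▸ hFm.lt_of_hasDerivAt_of_pos hd hf' hb
  refine hd.of_local_left_inverse (continuousAt_quantile hF hFm hF0 hF1 hy hright) hf'.ne' ?_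
  filter_upwards [Ioo_mem_nhds hy.1 hy.2] with y' hy' using map_quantile hF hF0 hF1 hy'

end Quantile

/-- if the density-quantile function satisfies `f(Q y) ∼ y^γ₁ L₁(1/y)` as
`y ↓ 0` with `0 < γ₁ < 1` and `L₁` slowly varying, then the distribution `F` has bounded
support from the left, i.e. `{x | F x = 0}` is nonempty (so `a = sup{x : F x = 0} > -∞`). -/
theorem stmt3 (F f Q L₁ : ℝ → ℝ) (γ₁ : ℝ) (hγ₁ : γ₁ ∈ Ioo (0:ℝ) 1)
    (hFmono : Monotone F) (hFcont : Continuous F)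
    (hF0 : Tendsto F atBot (nhds 0)) (hF1 : Tendsto F atTop (nhds 1))
    (hdens : ∀ x, HasDerivAt F (f x) x)
    (hQ : ∀ y ∈ Ioo (0:ℝ) 1, Q y = sInf {x | y ≤ F x})
    (hL₁ : ∀ t > (0:ℝ), Tendsto (fun x => L₁ (t * x) / L₁ x) atTop (nhds 1))
    (h0 : Tendsto (fun y => f (Q y) / (y ^ γ₁ * L₁ (1 / y)))
      (nhdsWithin 0 (Ioi 0)) (nhds 1)) :
    {x : ℝ | F x = 0}.Nonempty := by
  set h := fun y => f (quantile F y)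
  have hh : Tendsto (fun y => h y / (y ^ γ₁ * L₁ (1 / y))) (𝓝[>] 0) (𝓝 1) := by
    refine h0.congr' ?_
    filter_upwards [Ioo_mem_nhdsGT one_pos] with y hy using by rw [hQ y hy]; rfl
  have hpos : ∀ᶠ y in 𝓝[>] 0, 0 < h y :=
    (hh.eventually_ne one_ne_zero).mono fun y hy =>
      ((hdens _).nonneg_of_monotone hFmono).lt_of_ne' (div_ne_zero_iff.1 hy).1
  have h2γ : (2 : ℝ) ^ γ₁ < 2 := by
    simpa using Real.rpow_lt_rpow_of_exponent_lt one_lt_two hγ₁.2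
  have hdouble : ∀ᶠ y in 𝓝[>] 0, h (2 * y) ≤ (2 ^ γ₁ + 2) / 2 * h y := by
    filter_upwards [hpos, (SlowlyVarying.tendsto_comp_mul_div_self hL₁ two_pos hh).eventually
      (eventually_le_nhds (by linarith : (2 : ℝ) ^ γ₁ < (2 ^ γ₁ + 2) / 2))] with y hy hle
    exact (div_le_iff₀ hy).1 hle
  obtain ⟨y₀, hy₀, hsub⟩ := mem_nhdsGT_iff_exists_Ioo_subset.1
    ((hpos.and hdouble).and (Ioo_mem_nhdsGT one_pos))
  have hderiv : ∀ σ ∈ Ioo 0 y₀, HasDerivAt (quantile F) (h σ)⁻¹ σ := fun σ hσ =>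
    hasDerivAt_quantile hFcont hFmono hF0 hF1 (hsub hσ).2 (hdens _) (hsub hσ).1.1
  obtain ⟨m, hm⟩ := exists_forall_le_of_hasDerivAt_inv_of_doubling hy₀ (by positivity)
    (by linarith) hderiv (fun σ hσ => (hsub hσ).1.1)
    fun σ hσ => (hsub ⟨hσ.1, hσ.2.trans (half_lt_self hy₀)⟩).1.2
  refine ⟨m - 1, le_antisymm ?_ (hFmono.le_of_tendsto hF0 _)⟩
  refine ge_of_tendsto (tendsto_nhdsWithin_of_tendsto_nhds (s := Ioi 0) tendsto_id) ?_
  filter_upwards [Ioo_mem_nhdsGT hy₀] with σ hσ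
  exact (lt_of_lt_quantile hF0 hσ.1 (by linarith [hm σ hσ])).le
end

section
/- Let F be a distribution function with positive density f on (a,b) and quantile function Q, satisfying sup_{y∈(0,1)} y(1−y)|f'(Q(y))|/f²(Q(y)) ≤ γ. Then for all y, θ ∈ (0,1), f(Q(y))/f(Q(θ)) ≤ { (y∨θ)/(y∧θ) · (1−(y∧θ))/(1−(y∨θ)) }^{γ}. -/
/-!
Put `g(t) = log f(Q(t))`. Since `Q' = 1 / f(Q)`, the chain rule gives `g' = f'(Q) / f(Q)²`, so
condition (CsR3) reads `|g'(t)| ≤ γ / (t(1-t))`, and `1 / (t(1-t))` is the derivative of the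
log-odds `log t - log(1-t)`. Comparing derivatives, `|g(y) - g(θ)|` is at most `γ` times the
increment of the log-odds between `y ∧ θ` and `y ∨ θ`; exponentiating gives the lemma.
-/

open Set Filter

noncomputable def logOdds (t : ℝ) : ℝ := Real.log t - Real.log (1 - t)

lemma hasDerivAt_logOdds {t : ℝ} (h₀ : t ≠ 0) (h₁ : t ≠ 1) :
    HasDerivAt logOdds (t * (1 - t))⁻¹ t := by
  have h₁' : 1 - t ≠ 0 := sub_ne_zero.2 h₁.symm
  refine ((Real.hasDerivAt_log h₀).sub (((hasDerivAt_id t).const_sub 1).log h₁')).congr_deriv ?_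
  simp only [id]
  field_simp
  ring

lemma rpow_oddsRatio_eq_exp {u v : ℝ} (hu : u ∈ Ioo (0 : ℝ) 1) (hv : v ∈ Ioo (0 : ℝ) 1) (γ : ℝ) :
    (v / u * ((1 - u) / (1 - v))) ^ γ = Real.exp (γ * (logOdds v - logOdds u)) := by
  obtain ⟨hu₀, hu₁⟩ := hu
  obtain ⟨hv₀, hv₁⟩ := hv
  rw [← sub_pos] at hu₁ hv₁
  rw [Real.rpow_def_of_pos (by positivity), mul_comm, Real.log_mul (by positivity) (by positivity),
    Real.log_div hv₀.ne' hu₀.ne', Real.log_div hu₁.ne' hv₁.ne', logOdds, logOdds]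
  ring_nf

lemma monotoneOn_of_hasDerivAt_nonneg {s : Set ℝ} (hs : Convex ℝ s) {φ φ' : ℝ → ℝ}
    (hφ : ∀ x ∈ s, HasDerivAt φ (φ' x) x) (hφ' : ∀ x ∈ s, 0 ≤ φ' x) : MonotoneOn φ s :=
  monotoneOn_of_hasDerivWithinAt_nonneg hs
    (fun x hx => (hφ x hx).continuousAt.continuousWithinAt)
    (fun x hx => (hφ x (interior_subset hx)).hasDerivWithinAt)
    (fun x hx => hφ' x (interior_subset hx))

lemma abs_sub_le_sub_of_abs_deriv_le {s : Set ℝ} (hs : Convex ℝ s) {g g' h h' : ℝ → ℝ}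
    (hg : ∀ x ∈ s, HasDerivAt g (g' x) x) (hh : ∀ x ∈ s, HasDerivAt h (h' x) x)
    (hbound : ∀ x ∈ s, |g' x| ≤ h' x) {u v : ℝ} (hu : u ∈ s) (hv : v ∈ s) (huv : u ≤ v) :
    |g v - g u| ≤ h v - h u := by
  have hsub : MonotoneOn (h - g) s := monotoneOn_of_hasDerivAt_nonneg hs
    (fun x hx => (hh x hx).sub (hg x hx))
    (fun x hx => sub_nonneg.2 ((le_abs_self _).trans (hbound x hx)))
  have hadd : MonotoneOn (h + g) s := monotoneOn_of_hasDerivAt_nonneg hs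
    (fun x hx => (hh x hx).add (hg x hx))
    (fun x hx => by linarith [neg_abs_le (g' x), hbound x hx])
  have h₁ := hsub hu hv huv
  have h₂ := hadd hu hv huv
  simp only [Pi.sub_apply, Pi.add_apply] at h₁ h₂
  rw [abs_le]
  constructor <;> linarith

section RightInverse

variable {F Q : ℝ → ℝ} {s t : Set ℝ}

/-- `Q` is monotone and its image contains the open set `s ∩ F⁻¹' t`. -/
lemma StrictMonoOn.continuousAt_of_rightInvOn (hF : StrictMonoOn F s) (hFc : ContinuousOn F s)
    (hs : IsOpen s) (ht : IsOpen t) (hQ : ∀ y ∈ t, Q y ∈ s ∧ F (Q y) = y) {y : ℝ} (hy : y ∈ t) :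
    ContinuousAt Q y := by
  have hmono : MonotoneOn Q t := fun y₁ hy₁ y₂ hy₂ h => by
    rwa [← hF.le_iff_le (hQ y₁ hy₁).1 (hQ y₂ hy₂).1, (hQ y₁ hy₁).2, (hQ y₂ hy₂).2]
  have himage : s ∩ F ⁻¹' t ⊆ Q '' t := fun x ⟨hxs, hxt⟩ =>
    ⟨F x, hxt, hF.injOn (hQ _ hxt).1 hxs (hQ _ hxt).2⟩
  refine continuousAt_of_monotoneOn_of_image_mem_nhds hmono (ht.mem_nhds hy)
    (mem_of_superset ?_ himage)
  exact (hFc.isOpen_inter_preimage hs ht).mem_nhds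
    ⟨(hQ y hy).1, by rw [mem_preimage, (hQ y hy).2]; exact hy⟩

lemma hasDerivAt_rightInvOn {f : ℝ → ℝ} (hs : IsOpen s) (hsc : Convex ℝ s) (ht : IsOpen t)
    (hF : ∀ x ∈ s, HasDerivAt F (f x) x) (hfpos : ∀ x ∈ s, 0 < f x)
    (hQ : ∀ y ∈ t, Q y ∈ s ∧ F (Q y) = y) {y : ℝ} (hy : y ∈ t) :
    HasDerivAt Q (f (Q y))⁻¹ y := by
  have hFc : ContinuousOn F s := fun x hx => (hF x hx).continuousAt.continuousWithinAt
  have hFmono : StrictMonoOn F s := strictMonoOn_of_hasDerivWithinAt_pos hsc hFc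
    (fun x hx => (hF x (interior_subset hx)).hasDerivWithinAt)
    (fun x hx => hfpos x (interior_subset hx))
  exact .of_local_left_inverse (hFmono.continuousAt_of_rightInvOn hFc hs ht hQ hy)
    (hF _ (hQ y hy).1) (hfpos _ (hQ y hy).1).ne'
    (eventually_of_mem (ht.mem_nhds hy) fun z hz => (hQ z hz).2)

end RightInverse

lemma HasDerivAt.log_comp_of_hasDerivAt_inv {f f' Q : ℝ → ℝ} {y : ℝ}
    (hQ : HasDerivAt Q (f (Q y))⁻¹ y) (hf : HasDerivAt f (f' (Q y)) (Q y)) (hpos : f (Q y) ≠ 0) :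
    HasDerivAt (fun t => Real.log (f (Q t))) (f' (Q y) / f (Q y) ^ 2) y := by
  refine ((hf.comp y hQ).log hpos).congr_deriv ?_
  simp only [Function.comp_apply]
  field_simp

theorem stmt9_general (a b : ℝ) (F f f' Q : ℝ → ℝ) (γ : ℝ)
    (hF : ∀ x ∈ Ioo a b, HasDerivAt F (f x) x)
    (hf : ∀ x ∈ Ioo a b, HasDerivAt f (f' x) x)
    (hfpos : ∀ x ∈ Ioo a b, 0 < f x)
    (hQmem : ∀ y ∈ Ioo (0:ℝ) 1, Q y ∈ Ioo a b ∧ F (Q y) = y)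
    (hCsR3 : ∀ y ∈ Ioo (0:ℝ) 1, y * (1 - y) * |f' (Q y)| / (f (Q y))^2 ≤ γ) :
    ∀ y ∈ Ioo (0:ℝ) 1, ∀ θ ∈ Ioo (0:ℝ) 1,
      f (Q y) / f (Q θ) ≤
        ((max y θ / min y θ) * ((1 - min y θ) / (1 - max y θ))) ^ γ := by
  intro y hy θ hθ
  have hg : ∀ t ∈ Ioo (0:ℝ) 1,
      HasDerivAt (fun t => Real.log (f (Q t))) (f' (Q t) / f (Q t) ^ 2) t := fun t ht =>
    HasDerivAt.log_comp_of_hasDerivAt_inv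
      (hasDerivAt_rightInvOn isOpen_Ioo (convex_Ioo a b) isOpen_Ioo hF hfpos hQmem ht)
      (hf _ (hQmem t ht).1) (hfpos _ (hQmem t ht).1).ne'
  have hlogOdds : ∀ t ∈ Ioo (0:ℝ) 1,
      HasDerivAt (fun t => γ * logOdds t) (γ * (t * (1 - t))⁻¹) t :=
    fun t ht => (hasDerivAt_logOdds ht.1.ne' ht.2.ne).const_mul γ
  have hbound : ∀ t ∈ Ioo (0:ℝ) 1, |f' (Q t) / f (Q t) ^ 2| ≤ γ * (t * (1 - t))⁻¹ := by
    intro t ht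
    rw [← div_eq_mul_inv, le_div_iff₀ (mul_pos ht.1 (sub_pos.2 ht.2)), abs_div, abs_sq,
      div_mul_eq_mul_div, mul_comm |_|]
    exact hCsR3 t ht
  have key : |Real.log (f (Q y)) - Real.log (f (Q θ))| ≤
      γ * logOdds (max y θ) - γ * logOdds (min y θ) := by
    have := abs_sub_le_sub_of_abs_deriv_le (convex_Ioo 0 1) hg hlogOdds hbound
      (min_rec' _ hy hθ) (max_rec' _ hy hθ) min_le_max
    rcases le_total y θ with h | h
    · simpa only [max_eq_right h, min_eq_left h, abs_sub_comm] using this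
    · simpa only [max_eq_left h, min_eq_right h] using this
  have hfy := hfpos _ (hQmem y hy).1
  have hfθ := hfpos _ (hQmem θ hθ).1
  rw [rpow_oddsRatio_eq_exp (min_rec' _ hy hθ) (max_rec' _ hy hθ), mul_sub]
  calc f (Q y) / f (Q θ) = Real.exp (Real.log (f (Q y)) - Real.log (f (Q θ))) := by
        rw [Real.exp_sub, Real.exp_log hfy, Real.exp_log hfθ]
    _ ≤ _ := Real.exp_le_exp.2 ((le_abs_self _).trans key)

/-- Csörgő–Révész 1978, Lemma 1: if `F` has positive density `f` on `(a,b)`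
with derivative `f'`, quantile function `Q`, and
`sup_y y(1-y)|f'(Q y)|/f(Q y)² ≤ γ`, then for all `y, θ ∈ (0,1)`,
`f(Q y)/f(Q θ) ≤ ((y∨θ)/(y∧θ) · (1-(y∧θ))/(1-(y∨θ)))^γ`. -/
theorem stmt9 (a b : ℝ) (F f f' Q : ℝ → ℝ) (γ : ℝ) (hγ : 0 < γ) (hab : a < b)
    (hF : ∀ x ∈ Ioo a b, HasDerivAt F (f x) x)
    (hf : ∀ x ∈ Ioo a b, HasDerivAt f (f' x) x)
    (hfpos : ∀ x ∈ Ioo a b, 0 < f x)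
    (hQmem : ∀ y ∈ Ioo (0:ℝ) 1, Q y ∈ Ioo a b ∧ F (Q y) = y)
    (hCsR3 : ∀ y ∈ Ioo (0:ℝ) 1, y * (1 - y) * |f' (Q y)| / (f (Q y))^2 ≤ γ) :
    ∀ y ∈ Ioo (0:ℝ) 1, ∀ θ ∈ Ioo (0:ℝ) 1,
      f (Q y) / f (Q θ) ≤
        ((max y θ / min y θ) * ((1 - min y θ) / (1 - max y θ))) ^ γ :=
  stmt9_general a b F f f' Q γ hF hf hfpos hQmem hCsR3
end
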